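/- For positive integers k, m, n and a composition [λ_1,...,λ_m] of n with partial sums a_i = λ_1+...+λ_i, Σ_{k_1+...+k_m=k} q^{a_1 k_2 + a_2 k_3 + ... + a_{m-1} k_m} Π_{i=1}^{m} [λ_i + k_i - 1 choose k_i]_q = [n + k - 1 choose k]_q, as an identity of polynomials in q, where the sum is over all m-tuples of nonnegative integers summing to k. -/

import Mathlib

/-!
Write `M(c, k) = [c + k - 1 choose k]_q`, the `q`-count of the multisets of size `k` from `c`
letters. Distinguishing whether the largest letter is used gives
`M(c + 1, k + 1) = M(c, k + 1) + q^c M(c + 1, k)`, and this recursion yields the two-part identity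
`∑_{i + j = k} q^{a j} M(a, i) M(b, j) = M(a + b, k)` by induction on `b` and `k`. The general
identity follows by induction on the number of parts: splitting off the last part `λ_m`, its
exponent coefficient is `a_{m-1}`, so the inner sum collapses to the two-part identity with
`a = a_{m-1}` and `b = λ_m`.
-/

/-- The `q`-shifted factorial `(q;q)_n = (1-q)(1-q²)⋯(1-qⁿ)` in `ℚ(q)`. -/
noncomputable def qShiftedFactorial (n : ℕ) : RatFunc ℚ :=
  ∏ j ∈ Finset.range n, (1 - RatFunc.X ^ (j + 1))

/-- The Gaussian (q-)binomial coefficient. -/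
noncomputable def gaussBinom (n k : ℕ) : RatFunc ℚ :=
  if k ≤ n then qShiftedFactorial n / (qShiftedFactorial k * qShiftedFactorial (n - k)) else 0

open Finset

lemma RatFunc.one_sub_X_pow_ne_zero {n : ℕ} (hn : n ≠ 0) : (1 - X ^ n : RatFunc ℚ) ≠ 0 := by
  have : (1 - X ^ n : RatFunc ℚ) =
      algebraMap (Polynomial ℚ) (RatFunc ℚ) (-(Polynomial.X ^ n - Polynomial.C 1)) := by
    simp
  rw [this, Ne, map_eq_zero_iff _ (algebraMap_injective ℚ), neg_eq_zero]
  exact Polynomial.X_pow_sub_C_ne_zero (Nat.pos_of_ne_zero hn) 1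

@[simp]
lemma qShiftedFactorial_zero : qShiftedFactorial 0 = 1 := prod_range_zero _

lemma qShiftedFactorial_succ (n : ℕ) :
    qShiftedFactorial (n + 1) = qShiftedFactorial n * (1 - RatFunc.X ^ (n + 1)) :=
  prod_range_succ _ _

lemma qShiftedFactorial_ne_zero (n : ℕ) : qShiftedFactorial n ≠ 0 :=
  prod_ne_zero_iff.mpr fun _ _ => RatFunc.one_sub_X_pow_ne_zero (Nat.succ_ne_zero _)

lemma gaussBinom_add_left (k c : ℕ) :
    gaussBinom (k + c) k = qShiftedFactorial (k + c) / (qShiftedFactorial k * qShiftedFactorial c) := by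
  rw [gaussBinom, if_pos (Nat.le_add_right k c), Nat.add_sub_cancel_left]

lemma gaussBinom_self (n : ℕ) : gaussBinom n n = 1 := by
  simpa [qShiftedFactorial_ne_zero] using gaussBinom_add_left n 0

lemma gaussBinom_zero_right (n : ℕ) : gaussBinom n 0 = 1 := by
  simpa [qShiftedFactorial_ne_zero] using gaussBinom_add_left 0 n

lemma gaussBinom_of_lt {n k : ℕ} (h : n < k) : gaussBinom n k = 0 :=
  if_neg (Nat.not_le_of_lt h)

lemma gaussBinom_add_succ_succ (k c : ℕ) :
    gaussBinom (k + c + 1) (k + 1) =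
      gaussBinom (k + c) (k + 1) + RatFunc.X ^ c * gaussBinom (k + c) k := by
  cases c with
  | zero => simp [gaussBinom_self, gaussBinom_of_lt]
  | succ d =>
    rw [gaussBinom_add_left k (d + 1), show k + (d + 1) + 1 = (k + 1) + (d + 1) by ring,
      show k + (d + 1) = (k + 1) + d by ring, gaussBinom_add_left, gaussBinom_add_left,
      show k + 1 + (d + 1) = (k + d + 1) + 1 by ring, show k + 1 + d = k + d + 1 by ring,
      qShiftedFactorial_succ (k + d + 1), qShiftedFactorial_succ k, qShiftedFactorial_succ d]
    have := qShiftedFactorial_ne_zero k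
    have := qShiftedFactorial_ne_zero d
    have := RatFunc.one_sub_X_pow_ne_zero k.succ_ne_zero
    have := RatFunc.one_sub_X_pow_ne_zero d.succ_ne_zero
    field_simp
    ring

/-- `[c + k - 1 choose k]_q`; at `c = k = 0` the truncated subtraction still gives the right
value `1`. -/
noncomputable def qMultichoose (c k : ℕ) : RatFunc ℚ := gaussBinom (c + k - 1) k

@[simp]
lemma qMultichoose_zero_right (c : ℕ) : qMultichoose c 0 = 1 := gaussBinom_zero_right _

@[simp]
lemma qMultichoose_zero_succ (k : ℕ) : qMultichoose 0 (k + 1) = 0 := gaussBinom_of_lt (by omega)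

lemma qMultichoose_succ_succ (c k : ℕ) :
    qMultichoose (c + 1) (k + 1) =
      qMultichoose c (k + 1) + RatFunc.X ^ c * qMultichoose (c + 1) k := by
  simp only [qMultichoose, show c + 1 + (k + 1) - 1 = k + c + 1 by omega,
    show c + (k + 1) - 1 = k + c by omega, show c + 1 + k - 1 = k + c by omega]
  exact gaussBinom_add_succ_succ k c

theorem qMultichoose_add_eq_sum_antidiagonal (a b k : ℕ) :
    qMultichoose (a + b) k =
      ∑ p ∈ antidiagonal k, RatFunc.X ^ (a * p.2) * qMultichoose a p.1 * qMultichoose b p.2 := by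
  induction b generalizing k with
  | zero =>
    cases k with
    | zero => simp
    | succ k => simp [Nat.sum_antidiagonal_succ']
  | succ b ihb =>
    induction k with
    | zero => simp
    | succ k ihk =>
      rw [← add_assoc] at ihk ⊢
      rw [qMultichoose_succ_succ, ihb, ihk, Nat.sum_antidiagonal_succ', Nat.sum_antidiagonal_succ']
      simp only [qMultichoose_succ_succ, qMultichoose_zero_right, mul_add, sum_add_distrib, mul_sum]
      rw [add_assoc]
      congr 2
      exact sum_congr rfl fun _ _ => by ring

lemma Finset.Nat.sum_antidiagonalTuple_succ {M : Type*} [AddCommMonoid M] (m k : ℕ)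
    (f : (Fin (m + 1) → ℕ) → M) :
    ∑ x ∈ Nat.antidiagonalTuple (m + 1) k, f x =
      ∑ p ∈ antidiagonal k, ∑ x ∈ Nat.antidiagonalTuple m p.1, f (Fin.snoc x p.2) := by
  rw [sum_sigma']
  refine sum_nbij' (fun x => ⟨(∑ i, Fin.init x i, x (Fin.last m)), Fin.init x⟩)
    (fun y => Fin.snoc y.2 y.1.2) ?_ ?_ ?_ ?_ ?_
  · simp [Nat.mem_antidiagonalTuple, Fin.sum_univ_castSucc, Fin.init]
  · rintro ⟨⟨i, j⟩, x⟩
    simp_all [Nat.mem_antidiagonalTuple, Fin.sum_univ_castSucc]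
  · simp
  · rintro ⟨⟨i, j⟩, x⟩
    simp_all [Nat.mem_antidiagonalTuple]
  · simp

theorem qMultichoose_sum_eq_sum_antidiagonalTuple (lam : ℕ → ℕ) (m k : ℕ) :
    qMultichoose (∑ i ∈ range m, lam i) k =
      ∑ x ∈ Nat.antidiagonalTuple m k,
        RatFunc.X ^ (∑ i : Fin m, (∑ t ∈ range i, lam t) * x i) *
          ∏ i : Fin m, qMultichoose (lam i) (x i) := by
  induction m generalizing k with
  | zero => cases k <;> simp
  | succ m ih =>
    rw [Nat.sum_antidiagonalTuple_succ, sum_range_succ, qMultichoose_add_eq_sum_antidiagonal]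
    refine sum_congr rfl fun p _ => ?_
    simp only [Fin.sum_univ_castSucc, Fin.prod_univ_castSucc, Fin.snoc_castSucc, Fin.snoc_last,
      Fin.val_castSucc, Fin.val_last]
    rw [ih, mul_sum, sum_mul (a := qMultichoose (lam m) p.2)]
    exact sum_congr rfl fun _ _ => by ring

theorem generalized_q_vandermonde_multichoose_general (k m n : ℕ)
    (lam : ℕ → ℕ)
    (hsum : ∑ i ∈ Finset.range m, lam i = n) :
    ∑ kf ∈ Finset.Nat.antidiagonalTuple m k,
        RatFunc.X ^ (∑ i : Fin m, (∑ t ∈ Finset.range (i : ℕ), lam t) * kf i) *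
          ∏ i : Fin m, gaussBinom (lam i + kf i - 1) (kf i) =
      gaussBinom (n + k - 1) k := by
  subst hsum
  exact (qMultichoose_sum_eq_sum_antidiagonalTuple lam m k).symm

/-- Corollary 4.2: for a composition `[λ₁,…,λ_m]` of `n` with partial sums `a`,
`∑_{k₁+⋯+k_m=k} q^{a₁k₂+⋯+a_{m-1}k_m} ∏ᵢ [λᵢ+kᵢ-1 choose kᵢ]_q = [n+k-1 choose k]_q`.
With 0-indexing, the exponent is `∑ᵢ (λ₀+⋯+λ_{i-1})·kᵢ`. -/
theorem generalized_q_vandermonde_multichoose (k m n : ℕ) (hk : 0 < k) (hm : 0 < m) (hn : 0 < n)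
    (lam : ℕ → ℕ) (hpos : ∀ i < m, 0 < lam i)
    (hsum : ∑ i ∈ Finset.range m, lam i = n) :
    ∑ kf ∈ Finset.Nat.antidiagonalTuple m k,
        RatFunc.X ^ (∑ i : Fin m, (∑ t ∈ Finset.range (i : ℕ), lam t) * kf i) *
          ∏ i : Fin m, gaussBinom (lam i + kf i - 1) (kf i) =
      gaussBinom (n + k - 1) k :=
  generalized_q_vandermonde_multichoose_general k m n lam hsum
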